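/- arXiv:1308.4240 — 2 statements merged into one kernel-verified Lean document; each statement's English description precedes it below -/
import Mathlib

section
/- For any functions f_1,...,f_n, one has W_γ[1, f_1, ..., f_n](x) = W_γ[F_1, ..., F_n](x), where F_j(x) := -i( f_j(x + iγ/2) - f_j(x - iγ/2) ); that is, inserting the constant function 1 into a Casoratian reduces it to the Casoratian of the discrete derivatives. -/
/-- The Casorati determinant `W_γ[f_1,…,f_n](x) = i^{n(n-1)/2} det(f_k(x_j^{(n)}))`
with `x_j^{(n)} = x + i((n+1)/2 - j)γ`. -/
noncomputable def casoratian (γ : ℝ) {n : ℕ} (f : Fin n → ℂ → ℂ) (x : ℂ) : ℂ :=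
  Complex.I ^ (n * (n - 1) / 2) *
    Matrix.det (Matrix.of fun j k : Fin n =>
      f k (x + Complex.I * (((n : ℂ) + 1) / 2 - (((j : ℕ) : ℂ) + 1)) * (γ : ℂ)))

/-!
Subtracting from each row of the Casorati matrix of `1, f_1, …, f_n` the row above it leaves
`e_0` as first column, so the determinant reduces to the `n × n` determinant of the row
differences `f_k(x_{j+1}^{(n+1)}) - f_k(x_j^{(n+1)})`. The nodes `x_j^{(n+1)}` are the nodes
`x_j^{(n)}` shifted by `± iγ/2`, so these differences are `i F_k(x_j^{(n)})`; the resulting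
factor `i^n` completes `i^{n(n-1)/2}` to `i^{(n+1)n/2}`.
-/

theorem Matrix.det_eq_det_sub_of_col_zero_eq_one {R : Type*} [CommRing R] {n : ℕ}
    (M : Matrix (Fin (n + 1)) (Fin (n + 1)) R) (h : ∀ j, M j 0 = 1) :
    M.det = Matrix.det (Matrix.of fun j k : Fin n => M j.succ k.succ - M j.castSucc k.succ) := by
  set N : Matrix (Fin (n + 1)) (Fin (n + 1)) R :=
    Fin.cases (M 0) fun j => M j.succ - M j.castSucc with hN
  have hMN : M.det = N.det :=
    Matrix.det_eq_of_forall_row_eq_smul_add_pred (fun _ => 1) (fun _ => rfl)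
      fun i j => by simp [hN]
  have hN_col_zero : ∀ i : Fin n, N i.succ 0 = 0 := fun i => by simp [hN, h]
  rw [hMN, Matrix.det_succ_column_zero, Fin.sum_univ_succ]
  simp only [hN_col_zero, mul_zero, zero_mul, Finset.sum_const_zero, add_zero]
  simp only [hN, Fin.cases_zero, h, Fin.val_zero, pow_zero, one_mul]
  rfl

theorem Nat.succ_mul_div_two_eq (n : ℕ) :
    (n + 1) * (n + 1 - 1) / 2 = n * (n - 1) / 2 + n := by
  rw [← Nat.choose_two_right, ← Nat.choose_two_right, Nat.choose_succ_succ, Nat.choose_one_right,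
    add_comm]

noncomputable def casoratiNode (γ : ℝ) (m : ℕ) (x : ℂ) (j : Fin m) : ℂ :=
  x + Complex.I * (((m : ℂ) + 1) / 2 - (((j : ℕ) : ℂ) + 1)) * γ

theorem casoratian_eq_det (γ : ℝ) {m : ℕ} (f : Fin m → ℂ → ℂ) (x : ℂ) :
    casoratian γ f x =
      Complex.I ^ (m * (m - 1) / 2) * (Matrix.of fun j k => f k (casoratiNode γ m x j)).det :=
  rfl

section Nodes

variable (γ : ℝ) (n : ℕ) (x : ℂ) (j : Fin n)

theorem casoratiNode_castSucc :
    casoratiNode γ (n + 1) x j.castSucc = casoratiNode γ n x j + Complex.I * γ / 2 := by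
  simp only [casoratiNode, Fin.val_castSucc]
  push_cast
  ring

theorem casoratiNode_succ :
    casoratiNode γ (n + 1) x j.succ = casoratiNode γ n x j - Complex.I * γ / 2 := by
  simp only [casoratiNode, Fin.val_succ]
  push_cast
  ring

end Nodes

/-- Inserting the constant function 1 into a Casoratian reduces it to the Casoratian of
the discrete derivatives: `W_γ[1, f_1, …, f_n](x) = W_γ[F_1, …, F_n](x)` where
`F_j(x) = -i(f_j(x + iγ/2) - f_j(x - iγ/2))`. -/
theorem casoratian_cons_one (γ : ℝ) (n : ℕ) (f : Fin n → ℂ → ℂ) (x : ℂ) :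
    casoratian γ (Fin.cons (fun _ => (1 : ℂ)) f) x =
      casoratian γ
        (fun j y => -Complex.I *
          (f j (y + Complex.I * (γ : ℂ) / 2) - f j (y - Complex.I * (γ : ℂ) / 2))) x := by
  rw [casoratian_eq_det, casoratian_eq_det,
    Matrix.det_eq_det_sub_of_col_zero_eq_one _ fun j => by simp]
  have hdiff : (Matrix.of fun j k : Fin n => -Complex.I *
        (f k (casoratiNode γ n x j + Complex.I * γ / 2) -
          f k (casoratiNode γ n x j - Complex.I * γ / 2))) =
      Complex.I • Matrix.of fun j k : Fin n =>
        f k (casoratiNode γ (n + 1) x j.succ) - f k (casoratiNode γ (n + 1) x j.castSucc) := by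
    ext j k
    simp only [Matrix.of_apply, Matrix.smul_apply, smul_eq_mul, casoratiNode_succ,
      casoratiNode_castSucc]
    ring
  simp only [Matrix.of_apply, Fin.cons_succ]
  rw [hdiff, Matrix.det_smul, Fintype.card_fin, ← mul_assoc, ← pow_add,
    ← Nat.succ_mul_div_two_eq]
end

section
/- For the Wilson case, the shape-invariance potential relation V(x; λ + δ) = (φ(x - i)/φ(x)) · V(x - i/2; λ) holds, where V(x;λ) = ∏_{j=1}^4 (a_j + ix) / (2ix(2ix+1)), δ = (1/2,1/2,1/2,1/2), φ(x) = 2x, γ = 1, and κ = 1. -/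
/-! Substituting `x ↦ x - i/2` turns each numerator factor `a_j + ix` into `a_j + 1/2 + ix` and
the denominator `2ix(2ix + 1)` into `(2ix + 1) · 2i(x - i)`; the prefactor `(x - i)/x` then trades
the factor `x - i` for `x`. -/

open Complex

noncomputable def wilsonPotential {ι : Type*} [Fintype ι] (a : ι → ℂ) (x : ℂ) : ℂ :=
  (∏ j, (a j + I * x)) / (2 * I * x * (2 * I * x + 1))

lemma I_mul_sub_I_div_two (x : ℂ) : I * (x - I / 2) = I * x + 1 / 2 := by
  linear_combination (-1 / 2 : ℂ) * I_mul_I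

lemma two_mul_I_mul_sub_I_div_two (x : ℂ) : 2 * I * (x - I / 2) = 2 * I * x + 1 := by
  linear_combination (-1 : ℂ) * I_mul_I

lemma two_mul_I_mul_sub_I_div_two_add_one (x : ℂ) :
    2 * I * (x - I / 2) + 1 = 2 * I * (x - I) := by
  linear_combination I_mul_I

lemma div_mul_div_mul_mul_cancel {K : Type*} [Field K] {c : K} (hc : c ≠ 0) (x p b k : K) :
    c / x * (p / (b * (k * c))) = p / (k * x * b) := by
  rw [div_mul_div_comm, show x * (b * (k * c)) = c * (k * x * b) by ring,
    mul_div_mul_left p _ hc]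

lemma wilsonPotential_sub_I_div_two {ι : Type*} [Fintype ι] (a : ι → ℂ) (x : ℂ) :
    wilsonPotential a (x - I / 2) =
      (∏ j, (a j + 1 / 2 + I * x)) / ((2 * I * x + 1) * (2 * I * (x - I))) := by
  rw [wilsonPotential, two_mul_I_mul_sub_I_div_two_add_one, two_mul_I_mul_sub_I_div_two]
  congr 1
  refine Finset.prod_congr rfl fun j _ => ?_
  rw [I_mul_sub_I_div_two]
  ring

theorem wilsonPotential_shape_invariance {ι : Type*} [Fintype ι] (a : ι → ℂ) {x : ℂ}
    (hx : x ≠ I) :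
    wilsonPotential (fun j => a j + 1 / 2) x = (x - I) / x * wilsonPotential a (x - I / 2) := by
  rw [wilsonPotential_sub_I_div_two, div_mul_div_mul_mul_cancel (sub_ne_zero.mpr hx)]
  rfl

theorem wilson_shape_invariance_general (a : Fin 4 → ℂ) (x : ℂ) (h2 : x ≠ Complex.I) :
    (∏ j, (a j + 1 / 2 + Complex.I * x)) /
        (2 * Complex.I * x * (2 * Complex.I * x + 1)) =
      ((x - Complex.I) / x) *
        ((∏ j, (a j + Complex.I * (x - Complex.I / 2))) /
          (2 * Complex.I * (x - Complex.I / 2) *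
            (2 * Complex.I * (x - Complex.I / 2) + 1))) :=
  wilsonPotential_shape_invariance a h2

/-- The Wilson shape-invariance relation (`γ = 1`, `κ = 1`, `φ(x) = 2x`,
`δ = (1/2,1/2,1/2,1/2)`): with `V(x; a) = ∏_j (a_j + ix)/(2ix(2ix+1))`, one has
`V(x; λ+δ) = (φ(x-i)/φ(x)) V(x - i/2; λ)`. -/
theorem wilson_shape_invariance (a : Fin 4 → ℂ) (x : ℂ) (hx : x ≠ 0)
    (h1 : 2 * Complex.I * x + 1 ≠ 0) (h2 : x ≠ Complex.I) :
    (∏ j, (a j + 1 / 2 + Complex.I * x)) /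
        (2 * Complex.I * x * (2 * Complex.I * x + 1)) =
      ((x - Complex.I) / x) *
        ((∏ j, (a j + Complex.I * (x - Complex.I / 2))) /
          (2 * Complex.I * (x - Complex.I / 2) *
            (2 * Complex.I * (x - Complex.I / 2) + 1))) :=
  wilson_shape_invariance_general a x h2
end
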